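/- If q̂, p̂ are self-adjoint operators satisfying the canonical commutation relation [q̂,p̂] = iℏ (or more generally any elements of an associative algebra), the II^ℏ quantum bracket still satisfies the Jacobi identity; in particular the Jacobi identity for II^ℏ is independent of ℏ. Concretely: for any elements q̂, p̂ of an associative unital ℂ-algebra, the bracket on the rank-3 free module with structure constants μ̂₂₃¹ = (p̂+p₀)/(2p₀), μ̂₂₃² = ωq̂/(2p₀), μ̂₃₁¹ = ωq̂/(2p₀), μ̂₃₁² = (p₀−p̂)/(2p₀) has vanishing Jacobian on all basis triples, for every value of [q̂,p̂]. -/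

import Mathlib

/-- Antisymmetric bracket on the rank-3 free module over a ℂ-algebra `A`,
defined by structure constants `m i j k ∈ A`. -/
noncomputable def qbkt {A : Type*} [Ring A] [Algebra ℂ A]
    (m : Fin 3 → Fin 3 → Fin 3 → A) (x y : Fin 3 → A) : Fin 3 → A :=
  fun k => ∑ i : Fin 3, ∑ j : Fin 3, x i * y j * m i j k

/-- The quantum Jacobian `Ĵ(x,y,z) = [[x,y],z] + [[y,z],x] + [[z,x],y]`. -/
noncomputable def qjac {A : Type*} [Ring A] [Algebra ℂ A]
    (m : Fin 3 → Fin 3 → Fin 3 → A) (x y z : Fin 3 → A) : Fin 3 → A :=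
  qbkt m (qbkt m x y) z + qbkt m (qbkt m y z) x + qbkt m (qbkt m z x) y

/-- Structure constants of II^ℏ over a ℂ-algebra:
`μ̂₂₃¹ = (p̂+p₀)/(2p₀)`, `μ̂₂₃² = ωq̂/(2p₀)`, `μ̂₃₁¹ = ωq̂/(2p₀)`, `μ̂₃₁² = (p₀−p̂)/(2p₀)`. -/
noncomputable def muIIhC {A : Type*} [Ring A] [Algebra ℂ A]
    (qh ph : A) (ω p₀ : ℝ) : Fin 3 → Fin 3 → Fin 3 → A :=
  ![![![0, 0, 0], ![0, 0, 0],
      ![-((((2 * p₀ : ℝ) : ℂ))⁻¹ • ((ω : ℂ) • qh)),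
        -((((2 * p₀ : ℝ) : ℂ))⁻¹ • ((p₀ : ℂ) • (1 : A) - ph)), 0]],
    ![![0, 0, 0], ![0, 0, 0],
      ![(((2 * p₀ : ℝ) : ℂ))⁻¹ • (ph + (p₀ : ℂ) • (1 : A)),
        (((2 * p₀ : ℝ) : ℂ))⁻¹ • ((ω : ℂ) • qh), 0]],
    ![![(((2 * p₀ : ℝ) : ℂ))⁻¹ • ((ω : ℂ) • qh),
        (((2 * p₀ : ℝ) : ℂ))⁻¹ • ((p₀ : ℂ) • (1 : A) - ph), 0],
      ![-((((2 * p₀ : ℝ) : ℂ))⁻¹ • (ph + (p₀ : ℂ) • (1 : A))),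
        -((((2 * p₀ : ℝ) : ℂ))⁻¹ • ((ω : ℂ) • qh)), 0],
      ![0, 0, 0]]]

/-!
In the basis `e₁, e₂, e₃` (indices `0, 1, 2` of `Fin 3`), the vectors `e₁, e₂` span an abelian
ideal: every bracket lands in it and brackets inside it vanish. Hence a double bracket of basis
vectors vanishes as soon as two of its three arguments lie in the ideal, and by pigeonhole every
basis triple either has two entries in the ideal or repeats a vector, in which case the Jacobian
cancels by antisymmetry. On basis vectors the coefficients only enter through products
`μᵢⱼᵃ μₐₖˡ` in a fixed order, so nothing about commutators in `A` is ever needed.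
-/

section StructureConstants

variable {A : Type*} [Ring A] [Algebra ℂ A] (m : Fin 3 → Fin 3 → Fin 3 → A)

theorem qbkt_single_single (i j : Fin 3) : qbkt m (Pi.single i 1) (Pi.single j 1) = m i j := by
  funext k
  simp [qbkt, Pi.single_apply]

theorem qbkt_single_right (x : Fin 3 → A) (k : Fin 3) :
    qbkt m x (Pi.single k 1) = fun l => ∑ a, x a * m a k l := by
  funext l
  simp [qbkt, Pi.single_apply]

theorem qbkt_zero_left (y : Fin 3 → A) : qbkt m 0 y = 0 := by
  funext k
  simp [qbkt]

theorem qbkt_neg_left (x y : Fin 3 → A) : qbkt m (-x) y = -qbkt m x y := by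
  funext k
  simp [qbkt]

theorem qjac_rotate (x y z : Fin 3 → A) : qjac m x y z = qjac m y z x := by
  unfold qjac
  abel

theorem qjac_single_self_left_eq_zero (halt : ∀ i, m i i = 0) (hanti : ∀ i j, m j i = -m i j)
    (i k : Fin 3) : qjac m (Pi.single i 1) (Pi.single i 1) (Pi.single k 1) = 0 := by
  simp only [qjac, qbkt_single_single, halt, hanti k i, qbkt_zero_left, qbkt_neg_left, zero_add,
    neg_add_cancel]

theorem qbkt_bracket_single_of_mem {S : Set (Fin 3)} (habel : ∀ a ∈ S, ∀ b ∈ S, m a b = 0)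
    (hideal : ∀ i j, ∀ c ∉ S, m i j c = 0) {k : Fin 3} (hk : k ∈ S) (i j : Fin 3) :
    qbkt m (m i j) (Pi.single k 1) = 0 := by
  rw [qbkt_single_right]
  funext l
  refine Finset.sum_eq_zero fun a _ => ?_
  by_cases ha : a ∈ S
  · simp [habel a ha k hk]
  · simp [hideal i j a ha]

theorem qjac_single_eq_zero_of_mem_of_mem {S : Set (Fin 3)} (habel : ∀ a ∈ S, ∀ b ∈ S, m a b = 0)
    (hideal : ∀ i j, ∀ c ∉ S, m i j c = 0) {i j : Fin 3} (hi : i ∈ S) (hj : j ∈ S) (k : Fin 3) :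
    qjac m (Pi.single i 1) (Pi.single j 1) (Pi.single k 1) = 0 := by
  simp only [qjac, qbkt_single_single, habel i hi j hj, qbkt_zero_left,
    qbkt_bracket_single_of_mem m habel hideal hi, qbkt_bracket_single_of_mem m habel hideal hj,
    add_zero]

theorem qjac_single_eq_zero (halt : ∀ i, m i i = 0) (hanti : ∀ i j, m j i = -m i j)
    {S : Set (Fin 3)} (hcompl : Sᶜ.Subsingleton) (habel : ∀ a ∈ S, ∀ b ∈ S, m a b = 0)
    (hideal : ∀ i j, ∀ c ∉ S, m i j c = 0) (i j k : Fin 3) :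
    qjac m (Pi.single i 1) (Pi.single j 1) (Pi.single k 1) = 0 := by
  have hcases : i ∈ S ∧ j ∈ S ∨ j ∈ S ∧ k ∈ S ∨ k ∈ S ∧ i ∈ S ∨ i = j ∨ j = k ∨ k = i := by
    have hij : i ∉ S → j ∉ S → i = j := fun hi hj => hcompl hi hj
    have hjk : j ∉ S → k ∉ S → j = k := fun hj hk => hcompl hj hk
    have hki : k ∉ S → i ∉ S → k = i := fun hk hi => hcompl hk hi
    tauto
  rcases hcases with ⟨hi, hj⟩ | ⟨hj, hk⟩ | ⟨hk, hi⟩ | rfl | rfl | rfl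
  · exact qjac_single_eq_zero_of_mem_of_mem m habel hideal hi hj k
  · rw [qjac_rotate]
    exact qjac_single_eq_zero_of_mem_of_mem m habel hideal hj hk i
  · rw [qjac_rotate, qjac_rotate]
    exact qjac_single_eq_zero_of_mem_of_mem m habel hideal hk hi j
  · exact qjac_single_self_left_eq_zero m halt hanti i k
  · rw [qjac_rotate]
    exact qjac_single_self_left_eq_zero m halt hanti j i
  · rw [qjac_rotate, qjac_rotate]
    exact qjac_single_self_left_eq_zero m halt hanti k j

end StructureConstants

section IIh

variable {A : Type*} [Ring A] [Algebra ℂ A] (qh ph : A) (ω p₀ : ℝ)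

theorem muIIhC_self (i : Fin 3) : muIIhC qh ph ω p₀ i i = 0 := by
  fin_cases i <;> funext k <;> fin_cases k <;> rfl

theorem muIIhC_swap (i j : Fin 3) : muIIhC qh ph ω p₀ j i = -muIIhC qh ph ω p₀ i j := by
  fin_cases i <;> fin_cases j <;> funext k <;> fin_cases k <;> simp [muIIhC]

theorem muIIhC_apply_two (i j : Fin 3) : muIIhC qh ph ω p₀ i j 2 = 0 := by
  fin_cases i <;> fin_cases j <;> rfl

theorem muIIhC_of_ne_two {a b : Fin 3} (ha : a ≠ 2) (hb : b ≠ 2) : muIIhC qh ph ω p₀ a b = 0 := by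
  fin_cases a <;> fin_cases b <;> simp_all [muIIhC]

end IIh

theorem IIh_jacobi_complex_general {A : Type*} [Ring A] [Algebra ℂ A]
    (qh ph : A) (ω p₀ : ℝ) :
    ∀ i j k : Fin 3,
      qjac (muIIhC qh ph ω p₀)
        (fun l => if l = i then 1 else 0)
        (fun l => if l = j then 1 else 0)
        (fun l => if l = k then 1 else 0) = 0 := by
  intro i j k
  simp only [← Pi.single_apply]
  refine qjac_single_eq_zero _ (muIIhC_self qh ph ω p₀) (muIIhC_swap qh ph ω p₀)
    (S := {a | a ≠ 2}) ?_ (fun a ha b hb => muIIhC_of_ne_two qh ph ω p₀ ha hb) ?_ i j k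
  · intro a ha b hb
    simp_all
  · intro i j c hc
    obtain rfl : c = 2 := by simpa using hc
    exact muIIhC_apply_two qh ph ω p₀ i j

/-- For arbitrary `q̂, p̂` in an associative unital ℂ-algebra (no CCR needed), the
II^ℏ bracket has vanishing Jacobian on all basis triples, for every value of `[q̂,p̂]`. -/
theorem IIh_jacobi_complex {A : Type*} [Ring A] [Algebra ℂ A]
    (qh ph : A) (ω p₀ : ℝ) (hp₀ : p₀ ≠ 0) :
    ∀ i j k : Fin 3,
      qjac (muIIhC qh ph ω p₀)
        (fun l => if l = i then 1 else 0)
        (fun l => if l = j then 1 else 0)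
        (fun l => if l = k then 1 else 0) = 0 :=
  IIh_jacobi_complex_general qh ph ω p₀
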